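/- Let k ≥ 2. Then the limit lim_{n→∞} U_k(n)/k^{2n} exists. -/

import Mathlib

open Classical Finset Filter

/-- A border of `w`: a non-empty word that is both a proper prefix and a suffix of `w`. -/
def IsBorder {k : ℕ} (w b : List (Fin k)) : Prop :=
  b ≠ [] ∧ b ≠ w ∧ b <+: w ∧ b <:+ w

/-- A word is unbordered if it has no border. -/
def Unbordered {k : ℕ} (w : List (Fin k)) : Prop :=
  ∀ b, ¬ IsBorder w b

/-- A right-border of `(u,v)`: a non-empty proper suffix of `u` that is a proper prefix of `v`. -/
def IsRightBorder {k : ℕ} (u v b : List (Fin k)) : Prop :=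
  b ≠ [] ∧ b <:+ u ∧ b ≠ u ∧ b <+: v ∧ b ≠ v

/-- A left-border of `(u,v)`: a non-empty proper prefix of `u` that is a proper suffix of `v`. -/
def IsLeftBorder {k : ℕ} (u v b : List (Fin k)) : Prop :=
  b ≠ [] ∧ b <+: u ∧ b ≠ u ∧ b <:+ v ∧ b ≠ v

def MutuallyBordered {k : ℕ} (u v : List (Fin k)) : Prop :=
  (∃ b, IsRightBorder u v b) ∧ (∃ b, IsLeftBorder u v b)

def MutuallyUnbordered {k : ℕ} (u v : List (Fin k)) : Prop :=
  (¬ ∃ b, IsRightBorder u v b) ∧ (¬ ∃ b, IsLeftBorder u v b)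

def RightBordered {k : ℕ} (u v : List (Fin k)) : Prop :=
  (∃ b, IsRightBorder u v b) ∧ (¬ ∃ b, IsLeftBorder u v b)

/-- `lso u v`: the length of the shortest right-border of `(u,v)`, or `0` if there is none. -/
noncomputable def lso {k : ℕ} (u v : List (Fin k)) : ℕ :=
  sInf {m | ∃ b : List (Fin k), IsRightBorder u v b ∧ b.length = m}

def IsShortestRightBorder {k : ℕ} (u v b : List (Fin k)) : Prop :=
  IsRightBorder u v b ∧ ∀ b', IsRightBorder u v b' → b.length ≤ b'.length

def IsShortestLeftBorder {k : ℕ} (u v b : List (Fin k)) : Prop :=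
  IsLeftBorder u v b ∧ ∀ b', IsLeftBorder u v b' → b.length ≤ b'.length

/-- The finite set of all length-`n` words over `Σ_k`. -/
def Words (k n : ℕ) : Finset (List (Fin k)) :=
  (Finset.univ : Finset (Fin n → Fin k)).image List.ofFn

/-- `UB k n`: the number of unbordered words of length `n` over `Σ_k`. -/
noncomputable def UB (k n : ℕ) : ℕ :=
  ((Words k n).filter Unbordered).card

/-- `M k n`: the number of mutually bordered pairs of length-`n` words over `Σ_k`. -/
noncomputable def M (k n : ℕ) : ℕ :=
  ((Words k n ×ˢ Words k n).filter (fun p => MutuallyBordered p.1 p.2)).card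

/-- `R k n`: the number of right-bordered pairs of length-`n` words over `Σ_k`. -/
noncomputable def R (k n : ℕ) : ℕ :=
  ((Words k n ×ˢ Words k n).filter (fun p => RightBordered p.1 p.2)).card

/-- `U k n`: the number of mutually unbordered pairs of length-`n` words over `Σ_k`. -/
noncomputable def U (k n : ℕ) : ℕ :=
  ((Words k n ×ˢ Words k n).filter (fun p => MutuallyUnbordered p.1 p.2)).card

/-- `G u v m`: the number of unbordered words of length `m` over `Σ_k` having
`u` as a prefix and `v` as a suffix. -/
noncomputable def G {k : ℕ} (u v : List (Fin k)) (m : ℕ) : ℕ :=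
  ((Words k m).filter (fun w => Unbordered w ∧ u <+: w ∧ v <:+ w)).card

section StmtAux

lemma mem_words {k n : ℕ} {w : List (Fin k)} : w ∈ Words k n ↔ w.length = n := by
  simp only [Words, Finset.mem_image, Finset.mem_univ, true_and]
  constructor
  · rintro ⟨f, rfl⟩; simp
  · rintro rfl; exact ⟨w.get, List.ofFn_get w⟩

lemma card_words (k n : ℕ) : (Words k n).card = k ^ n := by
  rw [Words, Finset.card_image_of_injective _ List.ofFn_injective]
  simp

/-- No nonempty word is simultaneously a suffix of `x` and a prefix of `y`. -/
def NoM {k : ℕ} (x y : List (Fin k)) : Prop :=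
  ∀ b : List (Fin k), b ≠ [] → b <:+ x → ¬ b <+: y

noncomputable def Sh (k h : ℕ) : ℕ :=
  ((Words k h ×ˢ Words k h).filter (fun p => NoM p.1 p.2)).card

def OKh {k : ℕ} (h : ℕ) (u v : List (Fin k)) : Prop :=
  (∀ b : List (Fin k), b ≠ [] → b.length ≤ h → b <:+ u → ¬ b <+: v) ∧
  (∀ b : List (Fin k), b ≠ [] → b.length ≤ h → b <+: u → ¬ b <:+ v)

noncomputable def Nh (k n h : ℕ) : ℕ :=
  ((Words k n ×ˢ Words k n).filter (fun p => OKh h p.1 p.2)).card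

lemma suffix_drop_iff {k : ℕ} {w b : List (Fin k)} {n h : ℕ} (hw : w.length = n) (hh : h ≤ n) :
    b <:+ w.drop (n - h) ↔ b <:+ w ∧ b.length ≤ h := by
  have hd : (w.drop (n - h)).length = h := by simp [hw]; omega
  constructor
  · intro hb
    exact ⟨hb.trans (List.drop_suffix _ _), by have := hb.length_le; omega⟩
  · rintro ⟨hb, hl⟩
    exact List.suffix_of_suffix_length_le hb (List.drop_suffix _ _) (by omega)

lemma prefix_take_iff {k : ℕ} {w b : List (Fin k)} {n h : ℕ} (hw : w.length = n) (hh : h ≤ n) :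
    b <+: w.take h ↔ b <+: w ∧ b.length ≤ h := by
  have hd : (w.take h).length = h := by simp [hw]; omega
  constructor
  · intro hb
    exact ⟨hb.trans (List.take_prefix _ _), by have := hb.length_le; omega⟩
  · rintro ⟨hb, hl⟩
    exact List.prefix_of_prefix_length_le hb (List.take_prefix _ _) (by omega)

lemma okh_iff {k : ℕ} {u v : List (Fin k)} {n h : ℕ} (hu : u.length = n) (hv : v.length = n)
    (h2 : 2 * h ≤ n) :
    OKh h u v ↔ NoM (u.drop (n - h)) (v.take h) ∧ NoM (v.drop (n - h)) (u.take h) := by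
  have hh : h ≤ n := by omega
  constructor
  · rintro ⟨h1, h2'⟩
    constructor
    · intro b hb hsf hpf
      rw [suffix_drop_iff hu hh] at hsf
      rw [prefix_take_iff hv hh] at hpf
      exact h1 b hb hsf.2 hsf.1 hpf.1
    · intro b hb hsf hpf
      rw [suffix_drop_iff hv hh] at hsf
      rw [prefix_take_iff hu hh] at hpf
      exact h2' b hb hsf.2 hpf.1 hsf.1
  · rintro ⟨h1, h2'⟩
    constructor
    · intro b hb hl hsf hpf
      exact h1 b hb ((suffix_drop_iff hu hh).2 ⟨hsf, hl⟩) ((prefix_take_iff hv hh).2 ⟨hpf, hl⟩)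
    · intro b hb hl hpf hsf
      exact h2' b hb ((suffix_drop_iff hv hh).2 ⟨hsf, hl⟩) ((prefix_take_iff hu hh).2 ⟨hpf, hl⟩)

lemma decomp {k : ℕ} {w : List (Fin k)} {n h : ℕ} (hw : w.length = n) (h2 : 2 * h ≤ n) :
    w.take h ++ ((w.drop h).take (n - 2 * h) ++ w.drop (n - h)) = w := by
  have e1 : (w.drop h).drop (n - 2 * h) = w.drop (n - h) := by
    rw [List.drop_drop]
    congr 1
    omega
  rw [← e1, List.take_append_drop, List.take_append_drop]

lemma nh_eq {k : ℕ} {n h : ℕ} (h2 : 2 * h ≤ n) :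
    Nh k n h = Sh k h * (Sh k h * (k ^ (n - 2 * h) * k ^ (n - 2 * h))) := by
  have hh : h ≤ n := by omega
  have key : ((Words k n ×ˢ Words k n).filter (fun p => OKh h p.1 p.2)).card
      = (((Words k h ×ˢ Words k h).filter (fun p => NoM p.1 p.2)) ×ˢ
          (((Words k h ×ˢ Words k h).filter (fun p => NoM p.1 p.2)) ×ˢ
           (Words k (n - 2 * h) ×ˢ Words k (n - 2 * h)))).card := by
    apply Finset.card_nbij'
      (i := fun p => ((p.1.drop (n - h), p.2.take h), ((p.2.drop (n - h), p.1.take h),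
            ((p.1.drop h).take (n - 2 * h), (p.2.drop h).take (n - 2 * h)))))
      (j := fun q => (q.2.1.2 ++ (q.2.2.1 ++ q.1.1), q.1.2 ++ (q.2.2.2 ++ q.2.1.1)))
    · rintro ⟨u, v⟩ hp
      simp only [Finset.mem_coe, Finset.mem_filter, Finset.mem_product, mem_words] at hp ⊢
      obtain ⟨⟨hu, hv⟩, hok⟩ := hp
      rw [okh_iff hu hv h2] at hok
      refine ⟨⟨⟨by simp [hu]; omega, by simp [hv]; omega⟩, hok.1⟩,
        ⟨⟨by simp [hv]; omega, by simp [hu]; omega⟩, hok.2⟩,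
        by simp [hu]; omega, by simp [hv]; omega⟩
    · rintro ⟨⟨x, y⟩, ⟨x', y'⟩, c, d⟩ hq
      simp only [Finset.mem_coe, Finset.mem_filter, Finset.mem_product, mem_words] at hq ⊢
      obtain ⟨⟨⟨hx, hy⟩, hxy⟩, ⟨⟨hx', hy'⟩, hxy'⟩, hc, hd⟩ := hq
      have hu : (y' ++ (c ++ x)).length = n := by simp [hy', hc, hx]; omega
      have hv : (y ++ (d ++ x')).length = n := by simp [hy, hd, hx']; omega
      have hud : (y' ++ (c ++ x)).drop (n - h) = x := by
        rw [← List.append_assoc]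
        exact List.drop_left' (by simp [hy', hc]; omega)
      have hut : (y' ++ (c ++ x)).take h = y' := List.take_left' hy'
      have hvd : (y ++ (d ++ x')).drop (n - h) = x' := by
        rw [← List.append_assoc]
        exact List.drop_left' (by simp [hy, hd]; omega)
      have hvt : (y ++ (d ++ x')).take h = y := List.take_left' hy
      refine ⟨⟨hu, hv⟩, ?_⟩
      rw [okh_iff hu hv h2, hud, hut, hvd, hvt]
      exact ⟨hxy, hxy'⟩
    · rintro ⟨u, v⟩ hp
      simp only [Finset.mem_coe, Finset.mem_filter, Finset.mem_product, mem_words] at hp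
      obtain ⟨⟨hu, hv⟩, -⟩ := hp
      simp only [Prod.mk.injEq]
      exact ⟨decomp hu h2, decomp hv h2⟩
    · rintro ⟨⟨x, y⟩, ⟨x', y'⟩, c, d⟩ hq
      simp only [Finset.mem_coe, Finset.mem_filter, Finset.mem_product, mem_words] at hq
      obtain ⟨⟨⟨hx, hy⟩, -⟩, ⟨⟨hx', hy'⟩, -⟩, hc, hd⟩ := hq
      have hud : (y' ++ (c ++ x)).drop (n - h) = x := by
        rw [← List.append_assoc]
        exact List.drop_left' (by simp [hy', hc]; omega)
      have hut : (y' ++ (c ++ x)).take h = y' := List.take_left' hy'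
      have hvd : (y ++ (d ++ x')).drop (n - h) = x' := by
        rw [← List.append_assoc]
        exact List.drop_left' (by simp [hy, hd]; omega)
      have hvt : (y ++ (d ++ x')).take h = y := List.take_left' hy
      have hum : ((y' ++ (c ++ x)).drop h).take (n - 2 * h) = c := by
        rw [List.drop_left' hy', List.take_left' hc]
      have hvm : ((y ++ (d ++ x')).drop h).take (n - 2 * h) = d := by
        rw [List.drop_left' hy, List.take_left' hd]
      simp only [Prod.mk.injEq]
      exact ⟨⟨hud, hvt⟩, ⟨hvd, hut⟩, hum, hvm⟩
  rw [Nh, key, Finset.card_product, Finset.card_product, Finset.card_product,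
    card_words, Sh]


lemma nh_anti {k n : ℕ} {h h' : ℕ} (hhh : h ≤ h') : Nh k n h' ≤ Nh k n h := by
  apply Finset.card_le_card
  intro p hp
  simp only [Finset.mem_filter] at hp ⊢
  exact ⟨hp.1, fun b hb hl => hp.2.1 b hb (hl.trans hhh),
    fun b hb hl => hp.2.2 b hb (hl.trans hhh)⟩

lemma card_bdR {k n m : ℕ} (hm : m ≤ n) :
    ((Words k n ×ˢ Words k n).filter
      (fun p => ∃ b : List (Fin k), b.length = m ∧ b <:+ p.1 ∧ b <+: p.2)).card
      ≤ k ^ n * k ^ (n - m) := by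
  have h1 : ((Words k n ×ˢ Words k n).filter
      (fun p => ∃ b : List (Fin k), b.length = m ∧ b <:+ p.1 ∧ b <+: p.2)).card
      ≤ (Words k n ×ˢ Words k (n - m)).card := by
    apply Finset.card_le_card_of_injOn (fun p => (p.1, p.2.drop m))
    · rintro ⟨u, v⟩ hp
      simp only [Finset.mem_coe, Finset.mem_filter, Finset.mem_product, mem_words] at hp ⊢
      exact ⟨hp.1.1, by simp [hp.1.2]⟩
    · rintro ⟨u, v⟩ hp ⟨u', v'⟩ hp' heq
      simp only [Finset.mem_coe, Finset.mem_filter, Finset.mem_product, mem_words] at hp hp'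
      obtain ⟨⟨hu, hv⟩, b, hb, hbs, hbp⟩ := hp
      obtain ⟨⟨hu', hv'⟩, b', hb', hbs', hbp'⟩ := hp'
      simp only [Prod.mk.injEq] at heq ⊢
      obtain ⟨h1, h2⟩ := heq
      refine ⟨h1, ?_⟩
      have hb1 : b = u.drop (n - m) := by
        rw [List.suffix_iff_eq_drop] at hbs; rw [hbs, hu, hb]
      have hb1' : b' = u'.drop (n - m) := by
        rw [List.suffix_iff_eq_drop] at hbs'; rw [hbs', hu', hb']
      have hbb : b = b' := by rw [hb1, hb1', h1]
      have hv1 : v.take m = b := by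
        rw [List.prefix_iff_eq_take] at hbp; rw [hbp, hb]
      have hv1' : v'.take m = b' := by
        rw [List.prefix_iff_eq_take] at hbp'; rw [hbp', hb']
      calc v = v.take m ++ v.drop m := (List.take_append_drop m v).symm
        _ = v'.take m ++ v'.drop m := by rw [hv1, hv1', hbb, h2]
        _ = v' := List.take_append_drop m v'
  calc _ ≤ (Words k n ×ˢ Words k (n - m)).card := h1
    _ = k ^ n * k ^ (n - m) := by rw [Finset.card_product, card_words, card_words]

lemma card_bdL {k n m : ℕ} (hm : m ≤ n) :
    ((Words k n ×ˢ Words k n).filter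
      (fun p => ∃ b : List (Fin k), b.length = m ∧ b <+: p.1 ∧ b <:+ p.2)).card
      ≤ k ^ n * k ^ (n - m) := by
  have h1 : ((Words k n ×ˢ Words k n).filter
      (fun p => ∃ b : List (Fin k), b.length = m ∧ b <+: p.1 ∧ b <:+ p.2)).card
      ≤ (Words k n ×ˢ Words k (n - m)).card := by
    apply Finset.card_le_card_of_injOn (fun p => (p.2, p.1.drop m))
    · rintro ⟨u, v⟩ hp
      simp only [Finset.mem_coe, Finset.mem_filter, Finset.mem_product, mem_words] at hp ⊢
      exact ⟨hp.1.2, by simp [hp.1.1]⟩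
    · rintro ⟨u, v⟩ hp ⟨u', v'⟩ hp' heq
      simp only [Finset.mem_coe, Finset.mem_filter, Finset.mem_product, mem_words] at hp hp'
      obtain ⟨⟨hu, hv⟩, b, hb, hbp, hbs⟩ := hp
      obtain ⟨⟨hu', hv'⟩, b', hb', hbp', hbs'⟩ := hp'
      simp only [Prod.mk.injEq] at heq ⊢
      obtain ⟨h1, h2⟩ := heq
      refine ⟨?_, h1⟩
      have hb1 : b = v.drop (n - m) := by
        rw [List.suffix_iff_eq_drop] at hbs; rw [hbs, hv, hb]
      have hb1' : b' = v'.drop (n - m) := by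
        rw [List.suffix_iff_eq_drop] at hbs'; rw [hbs', hv', hb']
      have hbb : b = b' := by rw [hb1, hb1', h1]
      have hu1 : u.take m = b := by
        rw [List.prefix_iff_eq_take] at hbp; rw [hbp, hb]
      have hu1' : u'.take m = b' := by
        rw [List.prefix_iff_eq_take] at hbp'; rw [hbp', hb']
      calc u = u.take m ++ u.drop m := (List.take_append_drop m u).symm
        _ = u'.take m ++ u'.drop m := by rw [hu1, hu1', hbb, h2]
        _ = u' := List.take_append_drop m u'
  calc _ ≤ (Words k n ×ˢ Words k (n - m)).card := h1
    _ = k ^ n * k ^ (n - m) := by rw [Finset.card_product, card_words, card_words]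

lemma geo_lt {k : ℕ} (hk : 2 ≤ k) (t : ℕ) : ∑ i ∈ Finset.range t, k ^ i < k ^ t := by
  induction t with
  | zero => simp
  | succ t ih =>
    rw [Finset.sum_range_succ, pow_succ]
    have h1 : 1 ≤ k ^ t := Nat.one_le_pow _ _ (by omega)
    nlinarith

lemma sum_pow_le {k : ℕ} (hk : 2 ≤ k) (n h : ℕ) :
    ∑ m ∈ Finset.Ico (h + 1) n, k ^ (2 * n - m) ≤ k ^ (2 * n - h) := by
  have hinj : ∀ x ∈ Finset.Ico (h + 1) n, ∀ y ∈ Finset.Ico (h + 1) n,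
      2 * n - x = 2 * n - y → x = y := by
    intro x hx y hy hxy
    simp only [Finset.mem_Ico] at hx hy
    omega
  have himg : ∑ m ∈ Finset.Ico (h + 1) n, k ^ (2 * n - m)
      = ∑ i ∈ (Finset.Ico (h + 1) n).image (fun m => 2 * n - m), k ^ i :=
    (Finset.sum_image hinj).symm
  rw [himg]
  have hsub : (Finset.Ico (h + 1) n).image (fun m => 2 * n - m) ⊆ Finset.range (2 * n - h) := by
    intro i hi
    simp only [Finset.mem_image, Finset.mem_Ico] at hi
    obtain ⟨m, ⟨hm1, hm2⟩, rfl⟩ := hi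
    simp only [Finset.mem_range]
    omega
  calc _ ≤ ∑ i ∈ Finset.range (2 * n - h), k ^ i :=
        Finset.sum_le_sum_of_subset hsub
    _ ≤ k ^ (2 * n - h) := (geo_lt hk _).le

lemma U_le_nh {k n h : ℕ} (h2 : 2 * h ≤ n) : U k n ≤ Nh k n h := by
  apply Finset.card_le_card
  intro p hp
  simp only [Finset.mem_filter, Finset.mem_product, mem_words] at hp ⊢
  obtain ⟨⟨hu, hv⟩, hmu⟩ := hp
  refine ⟨⟨hu, hv⟩, ?_, ?_⟩
  · intro b hb hl hsf hpf
    have hlen : 1 ≤ b.length := by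
      cases b with
      | nil => exact absurd rfl hb
      | cons a l => simp
    have hn1 : 1 ≤ n := by
      have := hsf.length_le; omega
    have hltn : b.length < n := by omega
    exact hmu.1 ⟨b, hb, hsf, fun e => by rw [e] at hltn; omega,
      hpf, fun e => by rw [e] at hltn; omega⟩
  · intro b hb hl hpf hsf
    have hlen : 1 ≤ b.length := by
      cases b with
      | nil => exact absurd rfl hb
      | cons a l => simp
    have hn1 : 1 ≤ n := by
      have := hsf.length_le; omega
    have hltn : b.length < n := by omega
    exact hmu.2 ⟨b, hb, hpf, fun e => by rw [e] at hltn; omega,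
      hsf, fun e => by rw [e] at hltn; omega⟩

lemma nh_le_U {k n h : ℕ} (hk : 2 ≤ k) (h2 : 2 * h ≤ n) :
    Nh k n h ≤ U k n + 2 * k ^ (2 * n - h) := by
  classical
  set W := Words k n ×ˢ Words k n with hW
  have hsub : W.filter (fun p => OKh h p.1 p.2) ⊆
      W.filter (fun p => MutuallyUnbordered p.1 p.2) ∪
      (Finset.Ico (h + 1) n).biUnion (fun m =>
        W.filter (fun p => ∃ b : List (Fin k), b.length = m ∧ b <:+ p.1 ∧ b <+: p.2) ∪
        W.filter (fun p => ∃ b : List (Fin k), b.length = m ∧ b <+: p.1 ∧ b <:+ p.2)) := by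
    intro p hp
    simp only [Finset.mem_filter] at hp
    obtain ⟨hpW, hok⟩ := hp
    by_cases hmu : MutuallyUnbordered p.1 p.2
    · exact Finset.mem_union_left _ (Finset.mem_filter.2 ⟨hpW, hmu⟩)
    · apply Finset.mem_union_right
      have hlen : p.1.length = n ∧ p.2.length = n := by
        have h' := hpW
        rw [hW, Finset.mem_product] at h'
        exact ⟨mem_words.1 h'.1, mem_words.1 h'.2⟩
      rw [MutuallyUnbordered, not_and_or, not_not, not_not] at hmu
      rcases hmu with ⟨b, hb, hsf, hnu, hpf, hnv⟩ | ⟨b, hb, hpf, hnu, hsf, hnv⟩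
      · have hml : b.length < n := by
          rcases lt_or_eq_of_le hsf.length_le with h' | h'
          · omega
          · exact absurd (hsf.eq_of_length (by omega)) hnu
        have hmg : h < b.length := by
          by_contra hc
          exact hok.1 b hb (by omega) hsf hpf
        refine Finset.mem_biUnion.2 ⟨b.length, Finset.mem_Ico.2 ⟨by omega, hml⟩, ?_⟩
        exact Finset.mem_union_left _ (Finset.mem_filter.2 ⟨hpW, b, rfl, hsf, hpf⟩)
      · have hml : b.length < n := by
          rcases lt_or_eq_of_le hpf.length_le with h' | h'
          · omega
          · exact absurd (hpf.eq_of_length (by omega)) hnu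
        have hmg : h < b.length := by
          by_contra hc
          exact hok.2 b hb (by omega) hpf hsf
        refine Finset.mem_biUnion.2 ⟨b.length, Finset.mem_Ico.2 ⟨by omega, hml⟩, ?_⟩
        exact Finset.mem_union_right _ (Finset.mem_filter.2 ⟨hpW, b, rfl, hpf, hsf⟩)
  have hcard := Finset.card_le_card hsub
  have hb1 : ((Finset.Ico (h + 1) n).biUnion (fun m =>
        W.filter (fun p => ∃ b : List (Fin k), b.length = m ∧ b <:+ p.1 ∧ b <+: p.2) ∪
        W.filter (fun p => ∃ b : List (Fin k), b.length = m ∧ b <+: p.1 ∧ b <:+ p.2))).card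
      ≤ 2 * k ^ (2 * n - h) := by
    calc _ ≤ ∑ m ∈ Finset.Ico (h + 1) n,
          (W.filter (fun p => ∃ b : List (Fin k), b.length = m ∧ b <:+ p.1 ∧ b <+: p.2) ∪
           W.filter (fun p => ∃ b : List (Fin k), b.length = m ∧ b <+: p.1 ∧ b <:+ p.2)).card :=
        Finset.card_biUnion_le
      _ ≤ ∑ m ∈ Finset.Ico (h + 1) n, 2 * k ^ (2 * n - m) := by
        apply Finset.sum_le_sum
        intro m hm
        simp only [Finset.mem_Ico] at hm
        calc _ ≤ _ + _ := Finset.card_union_le _ _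
          _ ≤ k ^ n * k ^ (n - m) + k ^ n * k ^ (n - m) := Nat.add_le_add (card_bdR (by omega)) (card_bdL (by omega))
          _ = 2 * k ^ (2 * n - m) := by
            rw [← pow_add]
            have : n + (n - m) = 2 * n - m := by omega
            rw [this]; ring
      _ = 2 * ∑ m ∈ Finset.Ico (h + 1) n, k ^ (2 * n - m) := by
        rw [Finset.mul_sum]
      _ ≤ 2 * k ^ (2 * n - h) := Nat.mul_le_mul_left _ (sum_pow_le hk n h)
  calc Nh k n h ≤ _ := hcard
    _ ≤ (W.filter (fun p => MutuallyUnbordered p.1 p.2)).card + _ := Finset.card_union_le _ _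
    _ ≤ U k n + 2 * k ^ (2 * n - h) := Nat.add_le_add_left hb1 _

end StmtAux

theorem stmt15 (k : ℕ) (hk : 2 ≤ k) :
    ∃ L : ℝ,
      Filter.Tendsto (fun n : ℕ => (U k n : ℝ) / (k : ℝ) ^ (2 * n)) Filter.atTop (nhds L) := by
  have hk0 : (0:ℝ) < (k:ℝ) := by
    have : (2:ℝ) ≤ (k:ℝ) := by exact_mod_cast hk
    linarith
  have hk1 : (1:ℝ) < (k:ℝ) := by
    have : (2:ℝ) ≤ (k:ℝ) := by exact_mod_cast hk
    linarith
  set s : ℕ → ℝ := fun h => ((Sh k h : ℝ) / (k:ℝ) ^ (2 * h)) ^ 2 with hs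
  have nh_div : ∀ {n h : ℕ}, 2 * h ≤ n → (Nh k n h : ℝ) / (k:ℝ) ^ (2 * n) = s h := by
    intro n h h2
    rw [nh_eq h2]
    have e : (k:ℝ) ^ (2 * n) = ((k:ℝ) ^ (2 * h)) ^ 2 * ((k:ℝ) ^ (n - 2 * h)) ^ 2 := by
      rw [← pow_mul, ← pow_mul, ← pow_add]
      congr 1
      omega
    rw [hs]
    push_cast
    rw [e]
    have h1 : ((k:ℝ) ^ (2 * h)) ≠ 0 := by positivity
    have h2' : ((k:ℝ) ^ (n - 2 * h)) ≠ 0 := by positivity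
    field_simp
  have santi : Antitone s := by
    intro h h' hhh
    have e1 : s h' = (Nh k (2 * h') h' : ℝ) / (k:ℝ) ^ (2 * (2 * h')) := (nh_div (by omega)).symm
    have e2 : s h = (Nh k (2 * h') h : ℝ) / (k:ℝ) ^ (2 * (2 * h')) := (nh_div (by omega)).symm
    rw [e1, e2]
    apply div_le_div_of_nonneg_right ?_ (by positivity)
    exact_mod_cast nh_anti hhh
  have sbdd : BddBelow (Set.range s) := ⟨0, by rintro _ ⟨h, rfl⟩; positivity⟩
  refine ⟨⨅ h, s h, ?_⟩
  have hst : Tendsto s atTop (nhds (⨅ h, s h)) := tendsto_atTop_ciInf santi sbdd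
  have hdiv2 : Tendsto (fun n : ℕ => n / 2) atTop atTop :=
    tendsto_atTop_atTop.2 fun b => ⟨2 * b, fun n hn => by omega⟩
  have hupper_t : Tendsto (fun n : ℕ => s (n / 2)) atTop (nhds (⨅ h, s h)) := hst.comp hdiv2
  have herr : Tendsto (fun n : ℕ => 2 / (k:ℝ) ^ (n / 2)) atTop (nhds 0) := by
    have hbase : Tendsto (fun m : ℕ => 2 * ((k:ℝ)⁻¹) ^ m) atTop (nhds 0) := by
      have := (tendsto_pow_atTop_nhds_zero_of_lt_one
        (by positivity) (inv_lt_one_of_one_lt₀ hk1)).const_mul (2:ℝ)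
      simpa using this
    have hcomp := hbase.comp hdiv2
    have : (fun n : ℕ => 2 / (k:ℝ) ^ (n / 2))
        = (fun m : ℕ => 2 * ((k:ℝ)⁻¹) ^ m) ∘ (fun n : ℕ => n / 2) := by
      funext n
      simp [div_eq_mul_inv, inv_pow]
    rw [this]
    exact hcomp
  have hlower_t : Tendsto (fun n : ℕ => s (n / 2) - 2 / (k:ℝ) ^ (n / 2)) atTop
      (nhds (⨅ h, s h)) := by
    simpa using hupper_t.sub herr
  apply tendsto_of_tendsto_of_tendsto_of_le_of_le hlower_t hupper_t
  · -- lower bound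
    intro n
    have h2 : 2 * (n / 2) ≤ n := by omega
    have hpow : (k:ℝ) ^ (2 * n - n / 2) * (k:ℝ) ^ (n / 2) = (k:ℝ) ^ (2 * n) := by
      rw [← pow_add]
      congr 1
      omega
    have h1 : (Nh k n (n / 2) : ℝ) ≤ (U k n : ℝ) + 2 * (k:ℝ) ^ (2 * n - n / 2) := by
      exact_mod_cast nh_le_U hk h2
    have key : 2 * (k:ℝ) ^ (2 * n - n / 2) / (k:ℝ) ^ (2 * n) = 2 / (k:ℝ) ^ (n / 2) := by
      rw [← hpow, mul_comm ((k:ℝ) ^ (2 * n - n / 2)) ((k:ℝ) ^ (n / 2)),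
        mul_div_mul_right _ _ (by positivity : ((k:ℝ) ^ (2 * n - n / 2)) ≠ 0)]
    have hmain : (Nh k n (n / 2) : ℝ) / (k:ℝ) ^ (2 * n)
        ≤ ((U k n : ℝ) + 2 * (k:ℝ) ^ (2 * n - n / 2)) / (k:ℝ) ^ (2 * n) :=
      div_le_div_of_nonneg_right h1 (by positivity)
    rw [add_div, key, nh_div h2] at hmain
    show s (n / 2) - 2 / (k:ℝ) ^ (n / 2) ≤ (U k n : ℝ) / (k:ℝ) ^ (2 * n)
    linarith
  · -- upper bound
    intro n
    have h2 : 2 * (n / 2) ≤ n := by omega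
    show (U k n : ℝ) / (k:ℝ) ^ (2 * n) ≤ s (n / 2)
    rw [← nh_div h2]
    apply div_le_div_of_nonneg_right ?_ (by positivity)
    exact_mod_cast U_le_nh h2
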